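/- arXiv:2102.10584 — 2 statements merged into one kernel-verified Lean document; each statement's English description precedes it below -/
import Mathlib

section
/- For every finite simple graph G of order n with minimum degree δ(G) ≥ 2, the double domination number satisfies γ×2(G) ≤ min{α(G), n − α(G)} + γ(G), where α(G) is the independence number and γ(G) is the domination number. -/
/-! Basic domination-type definitions for finite simple graphs. -/

variable {V : Type*}

/-- The closed neighbourhood `N[v] = N(v) ∪ {v}`. -/
def closedNbhd (G : SimpleGraph V) (v : V) : Set V := insert v (G.neighborSet v)

/-- `D` is a dominating set: every vertex outside `D` has a neighbour in `D`. -/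
def IsDomSet (G : SimpleGraph V) (D : Set V) : Prop := ∀ v ∉ D, ∃ u ∈ D, G.Adj u v

/-- `D` is a double dominating set: `|N[v] ∩ D| ≥ 2` for every vertex `v`. -/
def IsDoubleDomSet (G : SimpleGraph V) (D : Set V) : Prop :=
  ∀ v : V, 2 ≤ (closedNbhd G v ∩ D).ncard

/-- `D` is a 2-dominating set: every vertex outside `D` has ≥ 2 neighbours in `D`. -/
def IsTwoDomSet (G : SimpleGraph V) (D : Set V) : Prop :=
  ∀ v ∉ D, 2 ≤ (G.neighborSet v ∩ D).ncard

/-- `D` is a total dominating set: every vertex has a neighbour in `D`. -/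
def IsTotalDomSet (G : SimpleGraph V) (D : Set V) : Prop := ∀ v : V, ∃ u ∈ D, G.Adj u v

/-- `S` is an independent set: no two vertices of `S` are adjacent. -/
def IsIndepSet' (G : SimpleGraph V) (S : Set V) : Prop := ∀ u ∈ S, ∀ v ∈ S, ¬ G.Adj u v

/-- `C` is a vertex cover: every edge has an endpoint in `C`. -/
def IsVertexCover (G : SimpleGraph V) (C : Set V) : Prop := ∀ u v, G.Adj u v → u ∈ C ∨ v ∈ C

/-- The domination number `γ(G)`. -/
noncomputable def domNum (G : SimpleGraph V) : ℕ :=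
  sInf {k | ∃ D : Set V, IsDomSet G D ∧ D.ncard = k}

/-- The double domination number `γ×2(G)`. -/
noncomputable def ddomNum (G : SimpleGraph V) : ℕ :=
  sInf {k | ∃ D : Set V, IsDoubleDomSet G D ∧ D.ncard = k}

/-- The 2-domination number `γ₂(G)`. -/
noncomputable def twoDomNum (G : SimpleGraph V) : ℕ :=
  sInf {k | ∃ D : Set V, IsTwoDomSet G D ∧ D.ncard = k}

/-- The total domination number `γt(G)`. -/
noncomputable def totalDomNum (G : SimpleGraph V) : ℕ :=
  sInf {k | ∃ D : Set V, IsTotalDomSet G D ∧ D.ncard = k}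

/-- The vertex cover number `β(G)`. -/
noncomputable def vcNum (G : SimpleGraph V) : ℕ :=
  sInf {k | ∃ C : Set V, IsVertexCover G C ∧ C.ncard = k}

/-- The independence number `α(G)`. -/
noncomputable def indepNum (G : SimpleGraph V) : ℕ :=
  sSup {k | ∃ S : Set V, IsIndepSet' G S ∧ S.ncard = k}

/-- The independent domination number `i(G)`. -/
noncomputable def indepDomNum (G : SimpleGraph V) : ℕ :=
  sInf {k | ∃ S : Set V, IsIndepSet' G S ∧ IsDomSet G S ∧ S.ncard = k}

/-- The set of leaves (vertices of degree one). -/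
def leafSet (G : SimpleGraph V) : Set V := {v | (G.neighborSet v).ncard = 1}

/-- The set of support vertices (vertices adjacent to a leaf). -/
def supportSet (G : SimpleGraph V) : Set V := {v | ∃ u, G.Adj v u ∧ u ∈ leafSet G}

/-! If `A ∪ D` is 2-dominating, `D` is dominating and `A` dominates `D \ A`, then every vertex
of `A ∪ D` without a neighbour in `A ∪ D` lies in `A ∩ D`; adding one neighbour of each such
vertex yields a double dominating set of size at most `|A ∪ D| + |A ∩ D| = |A| + |D|`.
For `A = V \ S`, `S` a maximum independent set, 2-domination comes from `δ(G) ≥ 2`. For `A = S`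
a maximum independent set meeting a minimum dominating set `D` in as few vertices as possible,
a vertex outside `S ∪ D` with a single neighbour in `S ∪ D` could be swapped into `S`, so
`S ∪ D` is 2-dominating. -/

def isolatedIn (G : SimpleGraph V) (X : Set V) : Set V := {v ∈ X | ∀ u ∈ X, ¬ G.Adj v u}

lemma IsTwoDomSet.mono {G : SimpleGraph V} {X Y : Set V} [Finite V] (hX : IsTwoDomSet G X)
    (hXY : X ⊆ Y) : IsTwoDomSet G Y := fun v hv =>
  (hX v fun h => hv (hXY h)).trans
    (Set.ncard_le_ncard (Set.inter_subset_inter_right _ hXY))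

lemma two_le_ncard_closedNbhd_inter {G : SimpleGraph V} [Finite V] {v u : V} {M : Set V}
    (hv : v ∈ M) (hu : u ∈ M) (huv : G.Adj v u) : 2 ≤ (closedNbhd G v ∩ M).ncard :=
  (Set.one_lt_ncard_iff).2
    ⟨v, u, ⟨Set.mem_insert _ _, hv⟩, ⟨Set.mem_insert_of_mem _ huv, hu⟩, G.ne_of_adj huv⟩

lemma isDoubleDomSet_union_image_isolatedIn {G : SimpleGraph V} [Finite V] {X : Set V}
    (hX : IsTwoDomSet G X) {g : V → V} (hg : ∀ v, G.Adj v (g v)) :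
    IsDoubleDomSet G (X ∪ g '' isolatedIn G X) := by
  intro v
  by_cases hvX : v ∈ X
  · by_cases hiso : v ∈ isolatedIn G X
    · exact two_le_ncard_closedNbhd_inter (Or.inl hvX) (Or.inr ⟨v, hiso, rfl⟩) (hg v)
    · obtain ⟨u, huX, hvu⟩ : ∃ u ∈ X, G.Adj v u := by
        simpa [isolatedIn, hvX] using hiso
      exact two_le_ncard_closedNbhd_inter (Or.inl hvX) (Or.inl huX) hvu
  · exact (hX v hvX).trans <| Set.ncard_le_ncard <|
      Set.inter_subset_inter (Set.subset_insert _ _) Set.subset_union_left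

lemma ddomNum_le_ncard {G : SimpleGraph V} {M : Set V} (hM : IsDoubleDomSet G M) :
    ddomNum G ≤ M.ncard :=
  Nat.sInf_le ⟨M, hM, rfl⟩

lemma ddomNum_le_ncard_add_ncard {G : SimpleGraph V} [Finite V] (hG : ∀ v, ∃ u, G.Adj v u)
    {A D : Set V} (hAD : IsTwoDomSet G (A ∪ D)) (hD : IsDomSet G D)
    (hA : ∀ v ∈ D, v ∉ A → ∃ u ∈ A, G.Adj u v) :
    ddomNum G ≤ A.ncard + D.ncard := by
  choose g hg using hG
  have hiso : isolatedIn G (A ∪ D) ⊆ A ∩ D := by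
    rintro v ⟨hvAD, hvnot⟩
    by_contra hvAD'
    obtain ⟨u, hu, huv⟩ : ∃ u ∈ A ∪ D, G.Adj u v := by
      by_cases hvD : v ∈ D
      · obtain ⟨u, huA, huv⟩ := hA v hvD fun hvA => hvAD' ⟨hvA, hvD⟩
        exact ⟨u, Or.inl huA, huv⟩
      · obtain ⟨u, huD, huv⟩ := hD v hvD
        exact ⟨u, Or.inr huD, huv⟩
    exact hvnot u hu huv.symm
  calc ddomNum G ≤ (A ∪ D ∪ g '' isolatedIn G (A ∪ D)).ncard :=
        ddomNum_le_ncard (isDoubleDomSet_union_image_isolatedIn hAD hg)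
    _ ≤ (A ∪ D).ncard + (g '' isolatedIn G (A ∪ D)).ncard := Set.ncard_union_le _ _
    _ ≤ (A ∪ D).ncard + (A ∩ D).ncard :=
        Nat.add_le_add_left ((Set.ncard_image_le).trans (Set.ncard_le_ncard hiso)) _
    _ = A.ncard + D.ncard := Set.ncard_union_add_ncard_inter A D

lemma exists_adj_of_two_le_ncard_neighborSet {G : SimpleGraph V}
    (hdeg : ∀ v, 2 ≤ (G.neighborSet v).ncard) (v : V) : ∃ u, G.Adj v u :=
  Set.nonempty_of_ncard_ne_zero (s := G.neighborSet v) (by have := hdeg v; omega)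

section Independence

variable {G : SimpleGraph V} {S : Set V}

lemma bddAbove_ncard_isIndepSet' [Finite V] :
    BddAbove {k | ∃ S : Set V, IsIndepSet' G S ∧ S.ncard = k} :=
  ⟨Nat.card V, fun _ ⟨T, _, hT⟩ => hT ▸ Set.ncard_le_card T⟩

lemma IsIndepSet'.ncard_le_indepNum [Finite V] (hS : IsIndepSet' G S) : S.ncard ≤ indepNum G :=
  le_csSup bddAbove_ncard_isIndepSet' ⟨S, hS, rfl⟩

lemma exists_isIndepSet'_ncard_eq_indepNum [Finite V] (G : SimpleGraph V) :
    ∃ S, IsIndepSet' G S ∧ S.ncard = indepNum G :=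
  Nat.sSup_mem (s := {k | ∃ S : Set V, IsIndepSet' G S ∧ S.ncard = k})
    ⟨0, ∅, fun _ h => h.elim, Set.ncard_empty V⟩ bddAbove_ncard_isIndepSet'

lemma IsIndepSet'.isDomSet_of_ncard_eq_indepNum [Finite V] (hS : IsIndepSet' G S)
    (hSc : S.ncard = indepNum G) : IsDomSet G S := by
  intro v hvS
  by_contra! hv
  have hvS' : IsIndepSet' G (insert v S) := by
    rintro a (rfl | haS) b (rfl | hbS) hab
    · exact G.irrefl hab
    · exact hv b hbS hab.symm
    · exact hv a haS hab
    · exact hS a haS b hbS hab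
  have := hvS'.ncard_le_indepNum
  rw [Set.ncard_insert_of_notMem hvS, hSc] at this
  omega

lemma IsIndepSet'.insert_sdiff_singleton (hS : IsIndepSet' G S) {s v : V}
    (hv : ∀ u ∈ S, G.Adj v u → u = s) : IsIndepSet' G (insert v (S \ {s})) := by
  rintro a (rfl | ⟨haS, has⟩) b (rfl | ⟨hbS, hbs⟩) hab
  · exact G.irrefl hab
  · exact hbs (hv b hbS hab)
  · exact has (hv a haS hab.symm)
  · exact hS a haS b hbS hab

lemma IsIndepSet'.isTwoDomSet_compl [Finite V] (hS : IsIndepSet' G S)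
    (hdeg : ∀ v, 2 ≤ (G.neighborSet v).ncard) : IsTwoDomSet G Sᶜ := by
  intro v hv
  rw [Set.notMem_compl_iff] at hv
  exact (hdeg v).trans (Set.ncard_le_ncard fun u hu => ⟨hu, fun huS => hS v hv u huS hu⟩)

/-- The exchange step: if a vertex `v ∉ S ∪ D` had a single neighbour `s` in `S ∪ D`, then
`s ∈ S ∩ D` and `S - s + v` would be a maximum independent set meeting `D` in fewer vertices. -/
lemma isTwoDomSet_union_of_ncard_inter_le [Finite V] {D : Set V} (hS : IsIndepSet' G S)
    (hSc : S.ncard = indepNum G) (hD : IsDomSet G D)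
    (hmin : ∀ T, IsIndepSet' G T → T.ncard = indepNum G →
      (S ∩ D).ncard ≤ (T ∩ D).ncard) :
    IsTwoDomSet G (S ∪ D) := by
  intro v hv
  obtain ⟨hvS, hvD⟩ := not_or.1 hv
  obtain ⟨s, hsS, hsv⟩ := hS.isDomSet_of_ncard_eq_indepNum hSc v hvS
  obtain ⟨d, hdD, hdv⟩ := hD v hvD
  by_contra! hlt
  have hone : ∀ u ∈ S ∪ D, G.Adj v u → u = s := fun u hu hvu =>
    (Set.ncard_le_one_iff (s := G.neighborSet v ∩ (S ∪ D))).1 (by omega)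
      ⟨hvu, hu⟩ ⟨hsv.symm, Or.inl hsS⟩
  have hsD : s ∈ D := hone d (Or.inr hdD) hdv.symm ▸ hdD
  have hT := hS.insert_sdiff_singleton fun u hu => hone u (Or.inl hu)
  have hTD : insert v (S \ {s}) ∩ D ⊆ (S ∩ D) \ {s} := by
    rintro u ⟨rfl | ⟨huS, hus⟩, huD⟩
    · exact (hvD huD).elim
    · exact ⟨⟨huS, huD⟩, hus⟩
  have := hmin _ hT ((Set.ncard_exchange hvS hsS).trans hSc)
  have := Set.ncard_le_ncard hTD
  have := Set.ncard_sdiff_singleton_lt_of_mem (Set.mem_inter hsS hsD)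
  omega

lemma exists_isIndepSet'_isTwoDomSet_union [Finite V] {D : Set V} (hD : IsDomSet G D) :
    ∃ S, IsIndepSet' G S ∧ S.ncard = indepNum G ∧ IsTwoDomSet G (S ∪ D) := by
  obtain ⟨S, ⟨hS, hSc⟩, hmin⟩ :=
    Set.exists_min_image {S | IsIndepSet' G S ∧ S.ncard = indepNum G} (fun S => (S ∩ D).ncard)
      (Set.toFinite _) (exists_isIndepSet'_ncard_eq_indepNum G)
  exact ⟨S, hS, hSc,
    isTwoDomSet_union_of_ncard_inter_le hS hSc hD fun T hT hTc => hmin T ⟨hT, hTc⟩⟩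

end Independence

lemma exists_isDomSet_ncard_eq_domNum (G : SimpleGraph V) :
    ∃ D, IsDomSet G D ∧ D.ncard = domNum G :=
  Nat.sInf_mem (s := {k | ∃ D : Set V, IsDomSet G D ∧ D.ncard = k})
    ⟨_, Set.univ, fun _ hv => (hv trivial).elim, rfl⟩

lemma ddomNum_le_indepNum_add_domNum {G : SimpleGraph V} [Finite V] (hG : ∀ v, ∃ u, G.Adj v u) :
    ddomNum G ≤ indepNum G + domNum G := by
  obtain ⟨D, hD, hDc⟩ := exists_isDomSet_ncard_eq_domNum G
  obtain ⟨S, hS, hSc, hSD⟩ := exists_isIndepSet'_isTwoDomSet_union hD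
  rw [← hSc, ← hDc]
  exact ddomNum_le_ncard_add_ncard hG hSD hD fun v _ hvS =>
    hS.isDomSet_of_ncard_eq_indepNum hSc v hvS

lemma ddomNum_le_card_sub_indepNum_add_domNum {G : SimpleGraph V} [Fintype V]
    (hdeg : ∀ v, 2 ≤ (G.neighborSet v).ncard) :
    ddomNum G ≤ (Fintype.card V - indepNum G) + domNum G := by
  obtain ⟨D, hD, hDc⟩ := exists_isDomSet_ncard_eq_domNum G
  obtain ⟨S, hS, hSc⟩ := exists_isIndepSet'_ncard_eq_indepNum G
  have hG := exists_adj_of_two_le_ncard_neighborSet hdeg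
  rw [← Nat.card_eq_fintype_card, ← hSc, ← Set.ncard_compl, ← hDc]
  refine ddomNum_le_ncard_add_ncard hG ((hS.isTwoDomSet_compl hdeg).mono Set.subset_union_left)
    hD fun v _ hvS => ?_
  obtain ⟨u, hvu⟩ := hG v
  exact ⟨u, fun huS => hS v (Set.notMem_compl_iff.1 hvS) u huS hvu, hvu.symm⟩

/-- For every finite simple graph `G` of order `n` with minimum degree `δ(G) ≥ 2`,
`γ×2(G) ≤ min {α(G), n − α(G)} + γ(G)`. -/
theorem stmt3 {V : Type*} [Fintype V] (G : SimpleGraph V)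
    (hdeg : ∀ v : V, 2 ≤ (G.neighborSet v).ncard) :
    ddomNum G ≤ min (indepNum G) (Fintype.card V - indepNum G) + domNum G := by
  rw [← min_add_add_right]
  exact le_min (ddomNum_le_indepNum_add_domNum (exists_adj_of_two_le_ncard_neighborSet hdeg))
    (ddomNum_le_card_sub_indepNum_add_domNum hdeg)
end

section
/- For every integer n ≥ 2, the graph G obtained from the complete graph K_n by adding one new vertex joined by an edge to exactly one vertex of K_n satisfies γ×2(G) = γt(G) + γ(G) = 3; that is, the bound γ×2(G) ≤ γt(G) + γ(G) for claw-free graphs is attained with equality by these graphs. -/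
/-! Basic domination-type definitions for finite simple graphs. -/

variable {V : Type*}

/-- The graph obtained from `K_n` (on the vertices `some i`) by adding one pendant
vertex `none` adjacent to exactly the vertex `some 0`. -/
def Kpend (n : ℕ) : SimpleGraph (Option (Fin n)) :=
  SimpleGraph.fromRel (fun x y =>
    (x ≠ none ∧ y ≠ none) ∨ (x = none ∧ ∃ i : Fin n, y = some i ∧ i.val = 0))

/-! The pendant vertex is a leaf, so it and its support lie in every double dominating set,
and a vertex of `K_n` other than the support needs two more vertices of its own closed
neighbourhood, which cannot include the leaf: hence `γ×2 ≥ 3`, attained by the leaf together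
with two clique vertices. The support vertex alone dominates, and two adjacent clique vertices
totally dominate, while no total dominating set is a singleton: `γ = 1` and `γt = 2`. -/

open SimpleGraph

variable {G : SimpleGraph V} {D : Set V} {u v w : V}

lemma sInf_ncard_eq {P : Set V → Prop} {k : ℕ} (hk : ∃ D, P D ∧ D.ncard = k)
    (hmin : ∀ D, P D → k ≤ D.ncard) : sInf {m | ∃ D, P D ∧ D.ncard = m} = k :=
  le_antisymm (Nat.sInf_le hk) (le_csInf ⟨k, hk⟩ fun _ ⟨D, hD, hm⟩ => hm ▸ hmin D hD)

lemma mem_closedNbhd : u ∈ closedNbhd G v ↔ u = v ∨ G.Adj v u := Iff.rfl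

lemma IsDomSet.one_le_ncard [Finite V] [Nonempty V] (h : IsDomSet G D) : 1 ≤ D.ncard := by
  obtain v := Classical.arbitrary V
  have hD : D.Nonempty := by
    by_cases hv : v ∈ D
    · exact ⟨v, hv⟩
    · obtain ⟨u, hu, -⟩ := h v hv
      exact ⟨u, hu⟩
  exact (Set.ncard_pos).2 hD

lemma IsTotalDomSet.two_le_ncard [Finite V] [Nonempty V] (h : IsTotalDomSet G D) :
    2 ≤ D.ncard := by
  obtain ⟨u, hu, -⟩ := h (Classical.arbitrary V)
  obtain ⟨w, hw, hwu⟩ := h u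
  exact (Set.one_lt_ncard_iff).2 ⟨w, u, hw, hu, hwu.ne⟩

/-- A leaf's closed neighbourhood has exactly two vertices, so it must lie inside `D`. -/
lemma IsDoubleDomSet.leaf_mem (h : IsDoubleDomSet G D) (hv : v ∈ leafSet G) : v ∈ D := by
  have hv' : (G.neighborSet v).ncard = 1 := hv
  have hfin : (closedNbhd G v).Finite :=
    (Set.finite_of_ncard_pos (by rw [hv']; norm_num)).insert v
  have hcard : (closedNbhd G v).ncard = 2 := by
    rw [closedNbhd, Set.ncard_insert_of_notMem (by simp) (hfin.subset (Set.subset_insert _ _)), hv']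
  have hsub : closedNbhd G v ∩ D = closedNbhd G v :=
    Set.eq_of_subset_of_ncard_le Set.inter_subset_left (hcard ▸ h v) hfin
  have hvD : v ∈ closedNbhd G v ∩ D := by rw [hsub]; exact Set.mem_insert v _
  exact hvD.2

lemma IsDoubleDomSet.three_le_ncard [Finite V] (h : IsDoubleDomSet G D) (hv : v ∈ leafSet G)
    (hw : v ∉ closedNbhd G w) : 3 ≤ D.ncard := by
  have hsub : insert v (closedNbhd G w ∩ D) ⊆ D :=
    Set.insert_subset (h.leaf_mem hv) Set.inter_subset_right
  calc 3 ≤ (closedNbhd G w ∩ D).ncard + 1 := by have := h w; omega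
    _ = (insert v (closedNbhd G w ∩ D)).ncard :=
      (Set.ncard_insert_of_notMem fun hv' => hw hv'.1).symm
    _ ≤ D.ncard := Set.ncard_le_ncard hsub

namespace Kpend

variable {n : ℕ}

lemma adj_some_some {i j : Fin n} : (Kpend n).Adj (some i) (some j) ↔ i ≠ j := by
  simp [Kpend]

lemma adj_none_some {i : Fin n} : (Kpend n).Adj none (some i) ↔ i.val = 0 := by
  simp [Kpend]

lemma some_mem_closedNbhd_some (i j : Fin n) : some j ∈ closedNbhd (Kpend n) (some i) := by
  rw [mem_closedNbhd, adj_some_some, Option.some_inj]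
  exact (eq_or_ne j i).imp id Ne.symm

lemma none_mem_leafSet (hn : 0 < n) : none ∈ leafSet (Kpend n) := by
  have : (Kpend n).neighborSet none = {some ⟨0, hn⟩} := by
    ext (_ | i)
    · simp
    · simp [adj_none_some, Fin.ext_iff]
  simp [leafSet, this]

lemma none_notMem_closedNbhd_some {i : Fin n} (hi : i.val ≠ 0) :
    none ∉ closedNbhd (Kpend n) (some i) := by
  rw [mem_closedNbhd, (Kpend n).adj_comm, adj_none_some]
  simpa using hi

lemma domNum_eq_one (hn : 0 < n) : domNum (Kpend n) = 1 := by
  refine sInf_ncard_eq ⟨{some ⟨0, hn⟩}, ?_, Set.ncard_singleton _⟩ fun D hD => hD.one_le_ncard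
  rintro (_ | i) hv
  · exact ⟨_, rfl, (adj_none_some.2 rfl).symm⟩
  · exact ⟨_, rfl, adj_some_some.2 fun h => hv (by rw [h]; rfl)⟩

lemma totalDomNum_eq_two (hn : 2 ≤ n) : totalDomNum (Kpend n) = 2 := by
  let z₀ : Fin n := ⟨0, by omega⟩
  let z₁ : Fin n := ⟨1, hn⟩
  have hz : z₀ ≠ z₁ := by simp [z₀, z₁, Fin.ext_iff]
  have : Nonempty (Fin n) := ⟨z₀⟩
  refine sInf_ncard_eq ⟨{some z₀, some z₁}, ?_, Set.ncard_pair (by simpa using hz)⟩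
    fun D hD => hD.two_le_ncard
  rintro (_ | i)
  · exact ⟨some z₀, by simp, (adj_none_some.2 rfl).symm⟩
  · by_cases hi : i = z₀
    · exact ⟨some z₁, by simp, adj_some_some.2 (hi ▸ hz.symm)⟩
    · exact ⟨some z₀, by simp, adj_some_some.2 (Ne.symm hi)⟩

lemma ddomNum_eq_three (hn : 2 ≤ n) : ddomNum (Kpend n) = 3 := by
  let z₀ : Fin n := ⟨0, by omega⟩
  let z₁ : Fin n := ⟨1, hn⟩
  have hz : z₀ ≠ z₁ := by simp [z₀, z₁, Fin.ext_iff]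
  refine sInf_ncard_eq ⟨{none, some z₀, some z₁}, ?_, ?_⟩ fun D hD =>
    hD.three_le_ncard (none_mem_leafSet (by omega))
      (none_notMem_closedNbhd_some (i := z₁) one_ne_zero)
  · rintro (_ | i) <;> refine (Set.one_lt_ncard_iff).2 ?_
    · exact ⟨none, some z₀, ⟨Or.inl rfl, by simp⟩,
        ⟨Or.inr (adj_none_some.2 rfl), by simp⟩, by simp⟩
    · exact ⟨some z₀, some z₁, ⟨some_mem_closedNbhd_some _ _, by simp⟩,
        ⟨some_mem_closedNbhd_some _ _, by simp⟩, by simpa using hz⟩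
  · rw [Set.ncard_insert_of_notMem (by simp), Set.ncard_pair (by simpa using hz)]

end Kpend

/-- For every `n ≥ 2`, the complete graph with a pendant edge satisfies
`γ×2(G) = γt(G) + γ(G) = 3`. -/
theorem stmt16 (n : ℕ) (hn : 2 ≤ n) :
    ddomNum (Kpend n) = totalDomNum (Kpend n) + domNum (Kpend n) ∧
    totalDomNum (Kpend n) + domNum (Kpend n) = 3 := by
  rw [Kpend.ddomNum_eq_three hn, Kpend.totalDomNum_eq_two hn, Kpend.domNum_eq_one (by omega)]
  exact ⟨rfl, rfl⟩
end
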